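/- arXiv:2502.09005 — 6 statements merged into one kernel-verified Lean document; each statement's English description precedes it below -/
import Mathlib

section
/- Let (ū, x̄, T̄) be a weak Pareto optimal solution of the free-time multi-objective control problem (MP)_r with T̄ > 0, and let real numbers a, A satisfy 0 < a < T̄ ≤ A. Define v̄(s) = T̄, w̄(s) = ū(T̄·s), τ̄(s) = T̄·s, and ȳ(s) = x̄(T̄·s) for s ∈ [0,1]. Then (v̄, w̄, τ̄, ȳ) is a weak Pareto optimal solution of the fixed-interval problem (MP)_{[0,1]}. -/
/-!
A competitor `(v, w, τ, y)` of the fixed-interval problem is turned back into a competitor of the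
free-time problem with the same endpoints and horizon `τ 1`. Since `a ≤ v ≤ A`, the clock
`τ = ∫ v` is bi-Lipschitz on `[0, 1]`, so it has a Lipschitz inverse `σ`, and `x = y ∘ σ`,
`u = w ∘ σ` solve the free-time system: wherever `y` and `τ` are differentiable at `σ t` (with
`τ' = v` by Lebesgue differentiation), `σ' t = (v (σ t))⁻¹` cancels the factor `v` in the
dynamics, and the times `t` where this fails lie in the image under the Lipschitz map `τ` of a
null set, hence form a null set. A strictly better competitor would therefore contradict the
optimality of `(u, x, T)`. Admissibility of the rescaled quadruple is the same computation for
the clock `τ s = T * s`.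
-/

open MeasureTheory Set
open scoped Manifold

noncomputable section

variable {n m r j k : ℕ}
variable {H : Type*} [TopologicalSpace H]
variable {M : Type*} [TopologicalSpace M] [ChartedSpace H M]

/-- The curve `x : [0,T] → M` solves the control system `ẋ(t) = f(t, x(t), u(t))` for the
control `u`: it is continuous on `[0,T]` and for a.e. `t ∈ (0,T)` it has manifold derivative
at `t` equal to the linear map sending `1` to `f(t, x(t), u(t))`. -/
def SolvesControlSystem (I : ModelWithCorners ℝ (EuclideanSpace ℝ (Fin n)) H)
    (f : ℝ → (p : M) → (Fin m → ℝ) → TangentSpace I p)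
    (u : ℝ → Fin m → ℝ) (x : ℝ → M) (T : ℝ) : Prop :=
  ContinuousOn x (Icc 0 T) ∧
    ∀ᵐ t ∂(volume.restrict (Ioo (0 : ℝ) T)),
      HasMFDerivAt 𝓘(ℝ, ℝ) I x t
        (ContinuousLinearMap.smulRight (1 : ℝ →L[ℝ] ℝ) (f t (x t) (u t)))

/-- A triple `(u, x, T)` is admissible for the free terminal-time multi-objective problem
`(MP)_r`: `T > 0`, `u` is a measurable `U`-valued control, `x` solves the control system on
`[0,T]`, and the endpoint constraints `φᵢ(x(0), x(T)) ≤ 0`, `ψ(x(0), x(T)) = 0` hold. -/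
def AdmissibleFree (I : ModelWithCorners ℝ (EuclideanSpace ℝ (Fin n)) H)
    (f : ℝ → (p : M) → (Fin m → ℝ) → TangentSpace I p)
    (U : Set (Fin m → ℝ)) (φ : M × M → Fin j → ℝ) (ψ : M × M → Fin k → ℝ)
    (u : ℝ → Fin m → ℝ) (x : ℝ → M) (T : ℝ) : Prop :=
  0 < T ∧ Measurable u ∧ (∀ t, u t ∈ U) ∧
    SolvesControlSystem I f u x T ∧
    (∀ i, φ (x 0, x T) i ≤ 0) ∧ ψ (x 0, x T) = 0

/-- `(u, x, T)` is a weak Pareto optimal solution of the free terminal-time problem `(MP)_r`: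
it is admissible and no admissible triple strictly decreases every component of the cost
`φ₀`. -/
def WeakParetoFree (I : ModelWithCorners ℝ (EuclideanSpace ℝ (Fin n)) H)
    (f : ℝ → (p : M) → (Fin m → ℝ) → TangentSpace I p)
    (U : Set (Fin m → ℝ)) (φ₀ : M × M → Fin r → ℝ)
    (φ : M × M → Fin j → ℝ) (ψ : M × M → Fin k → ℝ)
    (u : ℝ → Fin m → ℝ) (x : ℝ → M) (T : ℝ) : Prop :=
  AdmissibleFree I f U φ ψ u x T ∧
    ¬∃ (u' : ℝ → Fin m → ℝ) (x' : ℝ → M) (T' : ℝ),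
        AdmissibleFree I f U φ ψ u' x' T' ∧
          ∀ i, φ₀ (x' 0, x' T') i < φ₀ (x 0, x T) i

/-- A quadruple `(v, w, τ, y)` is admissible for the fixed-interval problem `(MP)_{[0,1]}`:
`v : [0,1] → [a,A]` and `w : [0,1] → U` are measurable, `τ(s) = ∫₀ˢ v(μ) dμ`, `y` is
continuous on `[0,1]` and for a.e. `s ∈ (0,1)` has manifold derivative at `s` equal to the
linear map sending `1` to `v(s) • f(τ(s), y(s), w(s))`, and the endpoint constraints hold. -/
def Admissible01 (I : ModelWithCorners ℝ (EuclideanSpace ℝ (Fin n)) H)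
    (f : ℝ → (p : M) → (Fin m → ℝ) → TangentSpace I p)
    (U : Set (Fin m → ℝ)) (a A : ℝ) (φ : M × M → Fin j → ℝ) (ψ : M × M → Fin k → ℝ)
    (v : ℝ → ℝ) (w : ℝ → Fin m → ℝ) (τ : ℝ → ℝ) (y : ℝ → M) : Prop :=
  Measurable v ∧ (∀ s ∈ Icc (0 : ℝ) 1, v s ∈ Icc a A) ∧
    Measurable w ∧ (∀ s, w s ∈ U) ∧
    (∀ s, τ s = ∫ μ in (0 : ℝ)..s, v μ) ∧
    ContinuousOn y (Icc 0 1) ∧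
    (∀ᵐ s ∂(volume.restrict (Ioo (0 : ℝ) 1)),
      HasMFDerivAt 𝓘(ℝ, ℝ) I y s
        (ContinuousLinearMap.smulRight (1 : ℝ →L[ℝ] ℝ) (v s • f (τ s) (y s) (w s)))) ∧
    (∀ i, φ (y 0, y 1) i ≤ 0) ∧ ψ (y 0, y 1) = 0

/-- `(v, w, τ, y)` is a weak Pareto optimal solution of the fixed-interval problem
`(MP)_{[0,1]}`: it is admissible and no admissible quadruple strictly decreases every
component of the cost `φ₀`. -/
def WeakPareto01 (I : ModelWithCorners ℝ (EuclideanSpace ℝ (Fin n)) H)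
    (f : ℝ → (p : M) → (Fin m → ℝ) → TangentSpace I p)
    (U : Set (Fin m → ℝ)) (a A : ℝ) (φ₀ : M × M → Fin r → ℝ)
    (φ : M × M → Fin j → ℝ) (ψ : M × M → Fin k → ℝ)
    (v : ℝ → ℝ) (w : ℝ → Fin m → ℝ) (τ : ℝ → ℝ) (y : ℝ → M) : Prop :=
  Admissible01 I f U a A φ ψ v w τ y ∧
    ¬∃ (v' : ℝ → ℝ) (w' : ℝ → Fin m → ℝ) (τ' : ℝ → ℝ) (y' : ℝ → M),
        Admissible01 I f U a A φ ψ v' w' τ' y' ∧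
          ∀ i, φ₀ (y' 0, y' 1) i < φ₀ (y 0, y 1) i

theorem LipschitzOnWith.volume_image_eq_zero {K : NNReal} {g : ℝ → ℝ} {s N : Set ℝ}
    (hg : LipschitzOnWith K g s) (hN : N ⊆ s) (h0 : volume N = 0) : volume (g '' N) = 0 := by
  have h := (hg.mono hN).hausdorffMeasure_image_le zero_le_one
  rw [hausdorffMeasure_real, h0, mul_zero] at h
  exact le_antisymm h zero_le

/-- The exceptional set is contained in the image under `g` of a null set. -/
theorem ae_restrict_comp_of_rightInvOn {P : ℝ → Prop} {K : NNReal} {g σ : ℝ → ℝ} {s t : Set ℝ}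
    (hs : MeasurableSet s) (ht : MeasurableSet t) (hg : LipschitzOnWith K g s)
    (hσ : MapsTo σ t s) (hinv : RightInvOn σ g t) (hP : ∀ᵐ x ∂volume.restrict s, P x) :
    ∀ᵐ y ∂volume.restrict t, P (σ y) := by
  rw [ae_restrict_iff' hs, ae_iff] at hP
  rw [ae_restrict_iff' ht, ae_iff]
  push Not at hP ⊢
  refine measure_mono_null ?_ (hg.volume_image_eq_zero (fun x hx => hx.1) hP)
  rintro y ⟨hyt, hPy⟩
  exact ⟨σ y, ⟨hσ hyt, hPy⟩, hinv hyt⟩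

theorem HasMFDerivAt.comp_hasDerivAt_of_smulRight
    {E : Type*} [NormedAddCommGroup E] [NormedSpace ℝ E] {I : ModelWithCorners ℝ E H}
    {γ : ℝ → M} {g : ℝ → ℝ} {t c : ℝ} {V : TangentSpace I (γ (g t))}
    (hγ : HasMFDerivAt 𝓘(ℝ, ℝ) I γ (g t) ((1 : ℝ →L[ℝ] ℝ).smulRight V))
    (hg : HasDerivAt g c t) :
    HasMFDerivAt 𝓘(ℝ, ℝ) I (γ ∘ g) t ((1 : ℝ →L[ℝ] ℝ).smulRight (c • V)) := by
  have hgM : HasMFDerivAt 𝓘(ℝ, ℝ) 𝓘(ℝ, ℝ) g t ((1 : ℝ →L[ℝ] ℝ).smulRight c) :=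
    hasMFDerivAt_iff_hasFDerivAt.2 hg.hasFDerivAt
  have hcomp : (1 : ℝ →L[ℝ] ℝ).smulRight (c • V) =
      ((1 : ℝ →L[ℝ] ℝ).smulRight V).comp ((1 : ℝ →L[ℝ] ℝ).smulRight c) := by
    simp [ContinuousLinearMap.smulRight_comp_smulRight]
  rw [hcomp]
  exact hγ.comp t hgM

theorem ae_hasMFDerivAt_comp_of_rightInvOn {E : Type*} [NormedAddCommGroup E]
    [NormedSpace ℝ E] {I : ModelWithCorners ℝ E H} {y : ℝ → M}
    {V : (s : ℝ) → TangentSpace I (y s)} {τ σ v : ℝ → ℝ} {K : NNReal} {s t : Set ℝ}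
    (hs : MeasurableSet s) (ht : IsOpen t) (hτ : LipschitzOnWith K τ s) (hσ : ContinuousOn σ t)
    (hσmaps : MapsTo σ t s) (hσinv : RightInvOn σ τ t) (hv : ∀ x ∈ s, v x ≠ 0)
    (hy : ∀ᵐ x ∂volume.restrict s,
      HasMFDerivAt 𝓘(ℝ, ℝ) I y x ((1 : ℝ →L[ℝ] ℝ).smulRight (v x • V x)))
    (hτd : ∀ᵐ x ∂volume.restrict s, HasDerivAt τ (v x) x) :
    ∀ᵐ x ∂volume.restrict t,
      HasMFDerivAt 𝓘(ℝ, ℝ) I (y ∘ σ) x ((1 : ℝ →L[ℝ] ℝ).smulRight (V (σ x))) := by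
  filter_upwards [ae_restrict_comp_of_rightInvOn hs ht.measurableSet hτ hσmaps hσinv (hy.and hτd),
    ae_restrict_mem ht.measurableSet] with x ⟨hyx, hτx⟩ hx
  have hvx := hv _ (hσmaps hx)
  have hσx : HasDerivAt σ (v (σ x))⁻¹ x := hτx.of_local_left_inverse
    (hσ.continuousAt (ht.mem_nhds hx)) hvx (Filter.eventually_of_mem (ht.mem_nhds hx) hσinv)
  simpa [smul_smul, inv_mul_cancel₀ hvx] using hyx.comp_hasDerivAt_of_smulRight hσx

section Primitive

variable {v : ℝ → ℝ} {c p q : ℝ}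

theorem mul_sub_le_integral_sub_integral (hv : IntegrableOn v (Icc p q)) (hc : c ∈ Icc p q)
    {a : ℝ} (ha : ∀ z ∈ Icc p q, a ≤ v z) {x y : ℝ} (hx : x ∈ Icc p q) (hy : y ∈ Icc p q)
    (hxy : x ≤ y) : a * (y - x) ≤ (∫ z in c..y, v z) - ∫ z in c..x, v z := by
  have hint : ∀ {x y}, x ∈ Icc p q → y ∈ Icc p q → IntervalIntegrable v volume x y :=
    fun hx hy => (hv.mono_set (uIcc_subset_Icc hx hy)).intervalIntegrable
  rw [intervalIntegral.integral_interval_sub_left (hint hc hy) (hint hc hx)]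
  calc a * (y - x) = ∫ _ in x..y, a := by simp [mul_comm]
    _ ≤ ∫ z in x..y, v z := intervalIntegral.integral_mono_on hxy intervalIntegrable_const
          (hint hx hy) fun z hz => ha z ⟨hx.1.trans hz.1, hz.2.trans hy.2⟩

theorem lipschitzOnWith_integral (hv : IntegrableOn v (Icc p q)) (hc : c ∈ Icc p q)
    {K : NNReal} (hK : ∀ z ∈ Icc p q, |v z| ≤ K) :
    LipschitzOnWith K (fun x => ∫ z in c..x, v z) (Icc p q) := by
  refine LipschitzOnWith.of_dist_le_mul fun x hx y hy => ?_
  have hint : ∀ {x y}, x ∈ Icc p q → y ∈ Icc p q → IntervalIntegrable v volume x y :=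
    fun hx hy => (hv.mono_set (uIcc_subset_Icc hx hy)).intervalIntegrable
  rw [dist_eq_norm, intervalIntegral.integral_interval_sub_left (hint hc hx) (hint hc hy),
    Real.dist_eq]
  exact intervalIntegral.norm_integral_le_of_norm_le_const fun z hz =>
    (Real.norm_eq_abs _).trans_le <| hK z (uIcc_subset_Icc hy hx (uIoc_subset_uIcc hz))

end Primitive

theorem exists_lipschitzWith_invOn {g : ℝ → ℝ} {a p q : ℝ} (ha : 0 < a) (hpq : p ≤ q)
    (hg : ContinuousOn g (Icc p q))
    (hexp : ∀ x ∈ Icc p q, ∀ y ∈ Icc p q, x ≤ y → a * (y - x) ≤ g y - g x) :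
    ∃ σ : ℝ → ℝ, LipschitzWith (a⁻¹).toNNReal σ ∧ MapsTo σ (Icc (g p) (g q)) (Icc p q) ∧
      InvOn σ g (Icc p q) (Icc (g p) (g q)) := by
  have hdist : ∀ x ∈ Icc p q, ∀ y ∈ Icc p q, a * dist x y ≤ dist (g x) (g y) := by
    intro x hx y hy
    rcases le_total x y with hxy | hyx
    · have h := hexp x hx y hy hxy
      rw [dist_comm, dist_comm (g x), Real.dist_eq, Real.dist_eq, abs_of_nonneg (by linarith),
        abs_of_nonneg (by nlinarith)]
      exact h
    · have h := hexp y hy x hx hyx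
      rw [Real.dist_eq, Real.dist_eq, abs_of_nonneg (by linarith),
        abs_of_nonneg (by nlinarith)]
      exact h
  have hmaps : MapsTo g (Icc p q) (Icc (g p) (g q)) := fun x hx =>
    ⟨sub_nonneg.1 <| (mul_nonneg ha.le (sub_nonneg.2 hx.1)).trans
        (hexp p (left_mem_Icc.2 hpq) x hx hx.1),
      sub_nonneg.1 <| (mul_nonneg ha.le (sub_nonneg.2 hx.2)).trans
        (hexp x hx q (right_mem_Icc.2 hpq) hx.2)⟩
  have hinj : InjOn g (Icc p q) := fun x hx y hy hxy => by
    have h := hdist x hx y hy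
    rw [hxy, dist_self] at h
    exact dist_le_zero.1 (by nlinarith [dist_nonneg (x := x) (y := y)])
  have hsurj : SurjOn g (Icc p q) (Icc (g p) (g q)) := intermediate_value_Icc hpq hg
  have hlip :
      LipschitzOnWith (a⁻¹).toNNReal (Function.invFunOn g (Icc p q)) (Icc (g p) (g q)) := by
    refine LipschitzOnWith.of_dist_le' fun s hs t ht => ?_
    have h := hdist _ (hsurj.mapsTo_invFunOn hs) _ (hsurj.mapsTo_invFunOn ht)
    rw [hsurj.rightInvOn_invFunOn hs, hsurj.rightInvOn_invFunOn ht] at h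
    exact (le_inv_mul_iff₀ ha).2 h
  obtain ⟨σ, hσ, heq⟩ := hlip.extend_real
  exact ⟨σ, hσ, hsurj.mapsTo_invFunOn.congr heq,
    hinj.leftInvOn_invFunOn.congr_left hmaps heq, hsurj.rightInvOn_invFunOn.congr_left heq⟩

theorem mapsTo_Ioo_of_rightInvOn {α β : Type*} [PartialOrder α] [Preorder β] {σ : β → α}
    {g : α → β} {p q : α} (hmaps : MapsTo σ (Icc (g p) (g q)) (Icc p q))
    (hinv : RightInvOn σ g (Icc (g p) (g q))) : MapsTo σ (Ioo (g p) (g q)) (Ioo p q) := by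
  intro t ht
  have hσt := hinv (Ioo_subset_Icc_self ht)
  obtain ⟨hpσ, hσq⟩ := hmaps (Ioo_subset_Icc_self ht)
  refine ⟨hpσ.lt_of_ne ?_, hσq.lt_of_ne ?_⟩ <;> rintro heq
  · rw [← heq] at hσt
    exact ht.1.ne hσt
  · rw [heq] at hσt
    exact ht.2.ne' hσt

section TimeChange

variable {I : ModelWithCorners ℝ (EuclideanSpace ℝ (Fin n)) H}
  {f : ℝ → (p : M) → (Fin m → ℝ) → TangentSpace I p} {U : Set (Fin m → ℝ)}
  {φ : M × M → Fin j → ℝ} {ψ : M × M → Fin k → ℝ} {a A : ℝ}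

theorem AdmissibleFree.admissible01_rescale {u : ℝ → Fin m → ℝ} {x : ℝ → M} {T : ℝ}
    (h : AdmissibleFree I f U φ ψ u x T) (haT : a ≤ T) (hTA : T ≤ A) :
    Admissible01 I f U a A φ ψ (fun _ => T) (fun s => u (T * s)) (fun s => T * s)
      (fun s => x (T * s)) := by
  obtain ⟨hT, hum, huU, ⟨hxc, hxd⟩, hφ, hψ⟩ := h
  have hmaps : MapsTo (T * ·) (Icc 0 1) (Icc 0 T) := fun s hs =>
    ⟨mul_nonneg hT.le hs.1, mul_le_of_le_one_right hT.le hs.2⟩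
  have hmapsIoo : MapsTo (T * ·) (Ioo 0 1) (Ioo 0 T) := fun s hs =>
    ⟨mul_pos hT hs.1, mul_lt_of_lt_one_right hT hs.2⟩
  have hinv : RightInvOn (T * ·) (T⁻¹ * ·) (Ioo 0 1) := fun s _ => inv_mul_cancel_left₀ hT.ne' s
  refine ⟨measurable_const, fun _ _ => ⟨haT, hTA⟩, hum.comp (measurable_const_mul T),
    fun _ => huU _, fun s => by simp [mul_comm],
    hxc.comp (continuous_const_mul T).continuousOn hmaps,
    ?_, by simpa using hφ, by simpa using hψ⟩
  filter_upwards [ae_restrict_comp_of_rightInvOn measurableSet_Ioo measurableSet_Ioo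
    (lipschitzWith_smul T⁻¹).lipschitzOnWith hmapsIoo hinv hxd] with s hs
  exact hs.comp_hasDerivAt_of_smulRight (by simpa using (hasDerivAt_id s).const_mul T)

theorem Admissible01.exists_admissibleFree {v : ℝ → ℝ} {w : ℝ → Fin m → ℝ} {τ : ℝ → ℝ}
    {y : ℝ → M} (h : Admissible01 I f U a A φ ψ v w τ y) (ha : 0 < a) :
    ∃ (u : ℝ → Fin m → ℝ) (x : ℝ → M),
      AdmissibleFree I f U φ ψ u x (τ 1) ∧ x 0 = y 0 ∧ x (τ 1) = y 1 := by
  obtain ⟨hvm, hv, hwm, hwU, hτ, hyc, hyd, hφ, hψ⟩ := h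
  have hτeq : τ = fun s => ∫ z in (0 : ℝ)..s, v z := funext hτ
  have h0 : (0 : ℝ) ∈ Icc (0 : ℝ) 1 := left_mem_Icc.2 zero_le_one
  have h1 : (1 : ℝ) ∈ Icc (0 : ℝ) 1 := right_mem_Icc.2 zero_le_one
  have hτ0 : τ 0 = 0 := by simp [hτ]
  have hvA : ∀ z ∈ Icc (0 : ℝ) 1, |v z| ≤ A := fun z hz =>
    abs_le.2 ⟨by linarith [(hv z hz).1, (hv z hz).2], (hv z hz).2⟩
  have hvint : IntegrableOn v (Icc 0 1) :=
    Measure.integrableOn_of_bounded (by simp) hvm.aestronglyMeasurable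
      ((ae_restrict_iff' measurableSet_Icc).2 (.of_forall hvA))
  have hexp : ∀ s ∈ Icc (0 : ℝ) 1, ∀ s' ∈ Icc (0 : ℝ) 1, s ≤ s' → a * (s' - s) ≤ τ s' - τ s :=
    fun s hs s' hs' hss' => hτeq ▸
      mul_sub_le_integral_sub_integral hvint h0 (fun z hz => (hv z hz).1) hs hs' hss'
  have hlip : LipschitzOnWith A.toNNReal τ (Icc 0 1) := hτeq ▸
    lipschitzOnWith_integral hvint h0 fun z hz => (hvA z hz).trans (Real.le_coe_toNNReal A)
  have hT : 0 < τ 1 := by linarith [hexp 0 h0 1 h1 zero_le_one]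
  obtain ⟨σ, hσlip, hσmaps, hσl, hσr⟩ := exists_lipschitzWith_invOn ha zero_le_one
    hlip.continuousOn hexp
  have hσIoo := mapsTo_Ioo_of_rightInvOn hσmaps hσr
  rw [hτ0] at hσmaps hσr hσIoo
  have hσ0 : σ 0 = 0 := by simpa [hτ0] using hσl h0
  have hσ1 : σ (τ 1) = 1 := hσl h1
  have hτD : ∀ᵐ s ∂volume.restrict (Ioo 0 1), HasDerivAt τ (v s) s := by
    filter_upwards [ae_restrict_of_ae
        (hvint.mono_set (uIcc_subset_Icc h0 h1)).intervalIntegrable.ae_hasDerivAt_integral,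
      ae_restrict_mem measurableSet_Ioo] with s hs hs01
    exact hτeq ▸ hs (Icc_subset_uIcc (Ioo_subset_Icc_self hs01)) 0 left_mem_uIcc
  have hxd : ∀ᵐ t ∂volume.restrict (Ioo 0 (τ 1)), HasMFDerivAt 𝓘(ℝ, ℝ) I (fun t => y (σ t)) t
      ((1 : ℝ →L[ℝ] ℝ).smulRight (f t (y (σ t)) (w (σ t)))) := by
    filter_upwards [ae_hasMFDerivAt_comp_of_rightInvOn (V := fun s => f (τ s) (y s) (w s))
        measurableSet_Ioo isOpen_Ioo (hlip.mono Ioo_subset_Icc_self)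
        hσlip.continuous.continuousOn hσIoo (hσr.mono Ioo_subset_Icc_self)
        (fun s hs => (ha.trans_le (hv s (Ioo_subset_Icc_self hs)).1).ne') hyd hτD,
      ae_restrict_mem measurableSet_Ioo] with t hxt ht
    rwa [hσr (Ioo_subset_Icc_self ht)] at hxt
  refine ⟨fun t => w (σ t), fun t => y (σ t), ⟨hT, hwm.comp hσlip.continuous.measurable,
    fun _ => hwU _, ⟨hyc.comp hσlip.continuous.continuousOn hσmaps, hxd⟩,
    by simpa only [hσ0, hσ1] using hφ, by simpa only [hσ0, hσ1] using hψ⟩,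
    by simp only [hσ0], by simp only [hσ1]⟩

end TimeChange

theorem weakPareto01_of_weakParetoFree_general
    (I : ModelWithCorners ℝ (EuclideanSpace ℝ (Fin n)) H)
    (f : ℝ → (p : M) → (Fin m → ℝ) → TangentSpace I p)
    (U : Set (Fin m → ℝ)) (φ₀ : M × M → Fin r → ℝ)
    (φ : M × M → Fin j → ℝ) (ψ : M × M → Fin k → ℝ)
    (u : ℝ → Fin m → ℝ) (x : ℝ → M) (T : ℝ)
    (hPareto : WeakParetoFree I f U φ₀ φ ψ u x T)
    (a A : ℝ) (ha : 0 < a) (haT : a < T) (hTA : T ≤ A) :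
    WeakPareto01 I f U a A φ₀ φ ψ
      (fun _ => T) (fun s => u (T * s)) (fun s => T * s) (fun s => x (T * s)) := by
  obtain ⟨hadm, hopt⟩ := hPareto
  refine ⟨hadm.admissible01_rescale haT.le hTA, ?_⟩
  rintro ⟨v, w, τ, y, hadm', hlt⟩
  obtain ⟨u', x', hadmFree, hx0, hx1⟩ := hadm'.exists_admissibleFree ha
  exact hopt ⟨u', x', τ 1, hadmFree, fun i => by simpa [hx0, hx1] using hlt i⟩

/-- Lemma 3.2 of the paper. Let `(ū, x̄, T̄)` be a weak Pareto optimal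
solution of the free terminal-time multi-objective problem `(MP)_r` with `T̄ > 0`, and let
`0 < a < T̄ ≤ A`. Define `v̄(s) = T̄`, `w̄(s) = ū(T̄·s)`, `τ̄(s) = T̄·s` and `ȳ(s) = x̄(T̄·s)`.
Then `(v̄, w̄, τ̄, ȳ)` is a weak Pareto optimal solution of the fixed-interval problem
`(MP)_{[0,1]}`. -/
theorem weakPareto01_of_weakParetoFree
    (I : ModelWithCorners ℝ (EuclideanSpace ℝ (Fin n)) H) [IsManifold I (⊤ : ℕ∞) M]
    (f : ℝ → (p : M) → (Fin m → ℝ) → TangentSpace I p)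
    (U : Set (Fin m → ℝ)) (φ₀ : M × M → Fin r → ℝ)
    (φ : M × M → Fin j → ℝ) (ψ : M × M → Fin k → ℝ)
    (u : ℝ → Fin m → ℝ) (x : ℝ → M) (T : ℝ)
    (hPareto : WeakParetoFree I f U φ₀ φ ψ u x T)
    (hT : 0 < T) (a A : ℝ) (ha : 0 < a) (haT : a < T) (hTA : T ≤ A) :
    WeakPareto01 I f U a A φ₀ φ ψ
      (fun _ => T) (fun s => u (T * s)) (fun s => T * s) (fun s => x (T * s)) :=
  weakPareto01_of_weakParetoFree_general I f U φ₀ φ ψ u x T hPareto a A ha haT hTA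

end
end

section
/- Let X be a real normed vector space, B ⊆ X a nonempty convex set, x ∈ closure(B), and v ∈ T^♭_B(x). Then the second-order adjacent subset T^{♭(2)}_B(x, v) is a convex subset of X. -/
open Filter Metric

/-- The adjacent cone to `B` at `x`:
`T^♭_B(x) = { v : dist(x + h·v, B)/h → 0 as h → 0⁺ }`. -/
def adjacentCone {X : Type*} [NormedAddCommGroup X] [NormedSpace ℝ X]
    (B : Set X) (x : X) : Set X :=
  {v : X | Tendsto (fun h : ℝ => infDist (x + h • v) B / h) (nhdsWithin 0 (Set.Ioi 0)) (nhds 0)}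

/-- The second-order adjacent subset to `B` at `(x, v)`:
`T^{♭(2)}_B(x, v) = { w : dist(x + h·v + h²·w, B)/h² → 0 as h → 0⁺ }`. -/
def secondOrderAdjacentSet {X : Type*} [NormedAddCommGroup X] [NormedSpace ℝ X]
    (B : Set X) (x v : X) : Set X :=
  {w : X | Tendsto (fun h : ℝ => infDist (x + h • v + h ^ 2 • w) B / h ^ 2)
    (nhdsWithin 0 (Set.Ioi 0)) (nhds 0)}

lemma infDist_combo_le {X : Type*} [NormedAddCommGroup X] [NormedSpace ℝ X]
    {B : Set X} (hB : B.Nonempty) (hconv : Convex ℝ B) {a b : ℝ}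
    (ha : 0 ≤ a) (hb : 0 ≤ b) (hab : a + b = 1) (p q : X) :
    infDist (a • p + b • q) B ≤ a * infDist p B + b * infDist q B := by
  refine le_of_forall_pos_le_add fun ε hε => ?_
  obtain ⟨y, hy, hdy⟩ := (infDist_lt_iff hB).1 (lt_add_of_pos_right _ hε : infDist p B < _)
  obtain ⟨z, hz, hdz⟩ := (infDist_lt_iff hB).1 (lt_add_of_pos_right _ hε : infDist q B < _)
  have hmem : a • y + b • z ∈ B := hconv hy hz ha hb hab
  calc infDist (a • p + b • q) B ≤ dist (a • p + b • q) (a • y + b • z) :=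
        infDist_le_dist_of_mem hmem
    _ ≤ a * dist p y + b * dist q z := by
        simp only [dist_eq_norm]
        have : a • p + b • q - (a • y + b • z) = a • (p - y) + b • (q - z) := by
          simp [smul_sub]; abel
        rw [this]
        calc ‖a • (p - y) + b • (q - z)‖ ≤ ‖a • (p - y)‖ + ‖b • (q - z)‖ := norm_add_le _ _
          _ = a * ‖p - y‖ + b * ‖q - z‖ := by
              rw [norm_smul, norm_smul, Real.norm_of_nonneg ha, Real.norm_of_nonneg hb]
    _ ≤ a * (infDist p B + ε) + b * (infDist q B + ε) := by
        gcongr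
    _ = a * infDist p B + b * infDist q B + ε := by linear_combination ε * hab

/-- If `B` is a nonempty convex subset of a real normed vector space `X`,
`x ∈ closure B` and `v ∈ T^♭_B(x)`, then the second-order adjacent subset `T^{♭(2)}_B(x, v)`
is convex. -/
theorem convex_secondOrderAdjacentSet {X : Type*} [NormedAddCommGroup X] [NormedSpace ℝ X]
    (B : Set X) (hB : B.Nonempty) (hconv : Convex ℝ B) (x : X) (hx : x ∈ closure B)
    (v : X) (hv : v ∈ adjacentCone B x) :
    Convex ℝ (secondOrderAdjacentSet B x v) := by
  intro w₁ hw₁ w₂ hw₂ a b ha hb hab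
  have hsum : Tendsto
      (fun h : ℝ => a * (infDist (x + h • v + h ^ 2 • w₁) B / h ^ 2)
        + b * (infDist (x + h • v + h ^ 2 • w₂) B / h ^ 2))
      (nhdsWithin 0 (Set.Ioi 0)) (nhds 0) := by
    have := (hw₁.const_mul a).add (hw₂.const_mul b)
    simpa using this
  refine tendsto_of_tendsto_of_tendsto_of_le_of_le' tendsto_const_nhds hsum ?_ ?_
  · filter_upwards [self_mem_nhdsWithin] with h hh
    have hh' : (0:ℝ) < h := hh
    exact div_nonneg infDist_nonneg (by positivity)
  · filter_upwards [self_mem_nhdsWithin] with h hh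
    have hh' : (0:ℝ) < h := hh
    have h2 : (0:ℝ) < h ^ 2 := by positivity
    have key : x + h • v + h ^ 2 • (a • w₁ + b • w₂)
        = a • (x + h • v + h ^ 2 • w₁) + b • (x + h • v + h ^ 2 • w₂) := by
      have h1 : a • (x + h • v + h ^ 2 • w₁) + b • (x + h • v + h ^ 2 • w₂)
          = (a + b) • (x + h • v) + h ^ 2 • (a • w₁ + b • w₂) := by module
      rw [h1, hab, one_smul]
    rw [key]
    calc infDist (a • (x + h • v + h ^ 2 • w₁) + b • (x + h • v + h ^ 2 • w₂)) B / h ^ 2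
        ≤ (a * infDist (x + h • v + h ^ 2 • w₁) B
            + b * infDist (x + h • v + h ^ 2 • w₂) B) / h ^ 2 := by
          gcongr
          exact infDist_combo_le hB hconv ha hb hab _ _
      _ = a * (infDist (x + h • v + h ^ 2 • w₁) B / h ^ 2)
            + b * (infDist (x + h • v + h ^ 2 • w₂) B / h ^ 2) := by ring
end

section
/- Let T > 0, C₁, C₂ ≥ 0, let A : [0,T] → Matrix(n,n,ℝ) and B : [0,T] → Matrix(n,m,ℝ) satisfy ‖A(s)‖ ≤ C₁ and ‖B(s)‖ ≤ C₂ (operator norms) for almost every s ∈ [0,T], and let δ : [0,T] → ℝᵐ be measurable with ∫₀ᵀ ‖δ(t)‖² dt < ∞. Suppose y : [0,T] → ℝⁿ is continuous, the function s ↦ A(s)·y(s) + B(s)·δ(s) is integrable on [0,T], and y(t) = ∫₀ᵗ (A(s)·y(s) + B(s)·δ(s)) ds for all t ∈ [0,T]. Then for every s ∈ [0,T], ‖y(s)‖ ≤ C₂ · √T · e^{C₁ T} · (∫₀ᵀ ‖δ(t)‖² dt)^{1/2}. -/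
open MeasureTheory Set

/-!
The a.e. operator-norm bounds give `‖y t‖ ≤ C₂ ∫₀ᵀ ‖δ‖ + C₁ ∫₀ᵗ ‖y‖`, and Cauchy–Schwarz bounds
`∫₀ᵀ ‖δ‖` by `√T (∫₀ᵀ ‖δ‖²)^{1/2}`. The integral form of Grönwall's inequality then yields the
factor `e^{C₁ t} ≤ e^{C₁ T}`.
-/

theorem integral_le_sqrt_measureReal_mul_sqrt_integral_sq {α : Type*} [MeasurableSpace α]
    {μ : Measure α} [IsFiniteMeasure μ] {f : α → ℝ} (hf₀ : 0 ≤ᵐ[μ] f) (hf : MemLp f 2 μ) :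
    ∫ x, f x ∂μ ≤ √(μ.real univ) * √(∫ x, f x ^ 2 ∂μ) := by
  have hHolder := integral_mul_le_Lp_mul_Lq_of_nonneg Real.HolderConjugate.two_two
    (ae_of_all μ fun _ => zero_le_one) hf₀ (by simpa using memLp_const (μ := μ) (1 : ℝ))
    (by simpa using hf)
  simpa [Real.sqrt_eq_rpow, Real.rpow_two] using hHolder

/-- Grönwall's inequality in integral form. -/
theorem le_mul_exp_of_le_add_mul_integral {u : ℝ → ℝ} {a b K L : ℝ} (hL : 0 ≤ L)
    (hu : ContinuousOn u (Icc a b)) (h : ∀ t ∈ Icc a b, u t ≤ K + L * ∫ s in a..t, u s) :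
    ∀ t ∈ Icc a b, u t ≤ K * Real.exp (L * (t - a)) := by
  intro t ht
  have hab : a ≤ b := ht.1.trans ht.2
  set ū := IccExtend hab (domRestrict (Icc a b) u)
  have hū : Continuous ū :=
    continuous_IccExtend_iff.2 (continuousOn_iff_continuous_domRestrict.1 hu)
  have hū_eq : ∀ x ∈ Icc a b, ū x = u x := fun x hx => IccExtend_of_mem hab _ hx
  have hint_eq : ∀ x ∈ Icc a b, ∫ s in a..x, ū s = ∫ s in a..x, u s := fun x hx =>
    intervalIntegral.integral_congr fun s hs => by
      rw [uIcc_of_le hx.1] at hs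
      exact hū_eq s ⟨hs.1, hs.2.trans hx.2⟩
  set ψ : ℝ → ℝ := fun x => K + L * ∫ s in a..x, ū s
  have hψ' : ∀ x, HasDerivAt ψ (L * ū x) x := fun x =>
    ((hū.integral_hasStrictDerivAt a x).hasDerivAt.const_mul L).const_add K
  have hu_le_ψ : ∀ x ∈ Icc a b, u x ≤ ψ x := fun x hx => by
    simpa only [ψ, hint_eq x hx] using h x hx
  -- `ψ' = L ū ≤ L ψ` on `[a, b]`, so `ψ` grows at most like `K e^{L (x - a)}`.
  have hψ'_le : ∀ x ∈ Ico a b, L * ū x ≤ L * ψ x + 0 := fun x hx => by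
    rw [add_zero, hū_eq x (Ico_subset_Icc_self hx)]
    exact mul_le_mul_of_nonneg_left (hu_le_ψ x (Ico_subset_Icc_self hx)) hL
  have hψ_le := le_gronwallBound_of_liminf_deriv_right_le (δ := K)
    (fun x _ => (hψ' x).continuousAt.continuousWithinAt)
    (fun x _ _ hr => (hψ' x).hasDerivWithinAt.liminf_right_slope_le hr) (by simp [ψ]) hψ'_le t ht
  rw [gronwallBound_ε0] at hψ_le
  exact (hu_le_ψ t ht).trans hψ_le

theorem norm_intervalIntegral_le_integral_add_mul_integral_norm {E : Type*}
    [NormedAddCommGroup E] [NormedSpace ℝ E] {f y : ℝ → E} {g : ℝ → ℝ} {a b C t : ℝ}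
    (hy : ContinuousOn y (Icc a b)) (hg : IntegrableOn g (Icc a b))
    (hg₀ : ∀ᵐ s ∂volume.restrict (Icc a b), 0 ≤ g s)
    (hf : ∀ᵐ s ∂volume.restrict (Icc a b), ‖f s‖ ≤ C * ‖y s‖ + g s) (ht : t ∈ Icc a b) :
    ‖∫ s in a..t, f s‖ ≤ (∫ s in Icc a b, g s) + C * ∫ s in a..t, ‖y s‖ := by
  have hsub : Ioc a t ⊆ Icc a b := fun s hs => ⟨hs.1.le, hs.2.trans ht.2⟩
  have hy_int : IntegrableOn (fun s => ‖y s‖) (Ioc a t) :=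
    (hy.norm.integrableOn_compact isCompact_Icc).mono_set hsub
  have hg_int : IntegrableOn g (Ioc a t) := hg.mono_set hsub
  rw [intervalIntegral.integral_of_le ht.1, intervalIntegral.integral_of_le ht.1]
  calc ‖∫ s in Ioc a t, f s‖
      ≤ ∫ s in Ioc a t, (C * ‖y s‖ + g s) :=
        norm_integral_le_of_norm_le ((hy_int.const_mul C).add hg_int)
          (ae_restrict_of_ae_restrict_of_subset hsub hf)
    _ = C * (∫ s in Ioc a t, ‖y s‖) + ∫ s in Ioc a t, g s := by
        rw [integral_add (hy_int.const_mul C) hg_int, integral_const_mul]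
    _ ≤ C * (∫ s in Ioc a t, ‖y s‖) + ∫ s in Icc a b, g s := by
        gcongr
    _ = (∫ s in Icc a b, g s) + C * ∫ s in Ioc a t, ‖y s‖ := add_comm _ _

theorem norm_le_of_linear_integral_equation_general
    {n m : ℕ} (T C₁ C₂ : ℝ) (hT : 0 < T) (hC₁ : 0 ≤ C₁) (hC₂ : 0 ≤ C₂)
    (A : ℝ → Matrix (Fin n) (Fin n) ℝ) (B : ℝ → Matrix (Fin n) (Fin m) ℝ)
    (hA : ∀ᵐ s ∂(volume.restrict (Icc (0 : ℝ) T)),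
      ‖LinearMap.toContinuousLinearMap (Matrix.toEuclideanLin (A s))‖ ≤ C₁)
    (hB : ∀ᵐ s ∂(volume.restrict (Icc (0 : ℝ) T)),
      ‖LinearMap.toContinuousLinearMap (Matrix.toEuclideanLin (B s))‖ ≤ C₂)
    (δ : ℝ → EuclideanSpace ℝ (Fin m)) (hδmeas : Measurable δ)
    (hδsq : IntegrableOn (fun t => ‖δ t‖ ^ 2) (Icc (0 : ℝ) T) volume)
    (y : ℝ → EuclideanSpace ℝ (Fin n)) (hy : ContinuousOn y (Icc 0 T))
    (heq : ∀ t ∈ Icc (0 : ℝ) T,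
      y t = ∫ s in (0 : ℝ)..t,
        (Matrix.toEuclideanLin (A s) (y s) + Matrix.toEuclideanLin (B s) (δ s))) :
    ∀ s ∈ Icc (0 : ℝ) T,
      ‖y s‖ ≤ C₂ * Real.sqrt T * Real.exp (C₁ * T) *
        Real.sqrt (∫ t in Icc (0 : ℝ) T, ‖δ t‖ ^ 2) := by
  have hδ_L2 : MemLp (fun t => ‖δ t‖) 2 (volume.restrict (Icc 0 T)) :=
    (memLp_two_iff_integrable_sq hδmeas.norm.aestronglyMeasurable).2 hδsq
  have hδ_L1 : ∫ t in Icc 0 T, ‖δ t‖ ≤ √T * √(∫ t in Icc 0 T, ‖δ t‖ ^ 2) := by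
    simpa [hT.le] using integral_le_sqrt_measureReal_mul_sqrt_integral_sq
      (ae_of_all _ fun t => norm_nonneg (δ t)) hδ_L2
  have hrhs : ∀ᵐ s ∂volume.restrict (Icc 0 T),
      ‖Matrix.toEuclideanLin (A s) (y s) + Matrix.toEuclideanLin (B s) (δ s)‖ ≤
        C₁ * ‖y s‖ + C₂ * ‖δ s‖ := by
    filter_upwards [hA, hB] with s hAs hBs
    exact (norm_add_le _ _).trans (add_le_add (ContinuousLinearMap.le_of_opNorm_le _ hAs _)
      (ContinuousLinearMap.le_of_opNorm_le _ hBs _))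
  have hy_le : ∀ t ∈ Icc 0 T,
      ‖y t‖ ≤ (C₂ * ∫ s in Icc 0 T, ‖δ s‖) + C₁ * ∫ s in (0 : ℝ)..t, ‖y s‖ := fun t ht => by
    simpa only [← heq t ht, integral_const_mul] using
      norm_intervalIntegral_le_integral_add_mul_integral_norm hy
        ((hδ_L2.integrable one_le_two).const_mul C₂)
        (ae_of_all _ fun s => mul_nonneg hC₂ (norm_nonneg _)) hrhs ht
  intro s hs
  calc ‖y s‖ ≤ (C₂ * ∫ t in Icc 0 T, ‖δ t‖) * Real.exp (C₁ * (s - 0)) :=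
        le_mul_exp_of_le_add_mul_integral hC₁ hy.norm hy_le s hs
    _ ≤ (C₂ * (√T * √(∫ t in Icc 0 T, ‖δ t‖ ^ 2))) * Real.exp (C₁ * T) := by
        gcongr
        linarith [hs.2]
    _ = _ := by ring

/-- Gronwall-type continuous-dependence estimate for the variational equation:
if `‖A(s)‖ ≤ C₁`, `‖B(s)‖ ≤ C₂` (Euclidean operator norms) a.e. on `[0,T]`, `δ` is measurable
and square-integrable, and `y` is a continuous solution of
`y(t) = ∫₀ᵗ (A(s)·y(s) + B(s)·δ(s)) ds` on `[0,T]`, then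
`‖y(s)‖ ≤ C₂ √T e^{C₁ T} (∫₀ᵀ ‖δ‖²)^{1/2}` for every `s ∈ [0,T]`. -/
theorem norm_le_of_linear_integral_equation
    {n m : ℕ} (T C₁ C₂ : ℝ) (hT : 0 < T) (hC₁ : 0 ≤ C₁) (hC₂ : 0 ≤ C₂)
    (A : ℝ → Matrix (Fin n) (Fin n) ℝ) (B : ℝ → Matrix (Fin n) (Fin m) ℝ)
    (hA : ∀ᵐ s ∂(volume.restrict (Icc (0 : ℝ) T)),
      ‖LinearMap.toContinuousLinearMap (Matrix.toEuclideanLin (A s))‖ ≤ C₁)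
    (hB : ∀ᵐ s ∂(volume.restrict (Icc (0 : ℝ) T)),
      ‖LinearMap.toContinuousLinearMap (Matrix.toEuclideanLin (B s))‖ ≤ C₂)
    (δ : ℝ → EuclideanSpace ℝ (Fin m)) (hδmeas : Measurable δ)
    (hδsq : IntegrableOn (fun t => ‖δ t‖ ^ 2) (Icc (0 : ℝ) T) volume)
    (y : ℝ → EuclideanSpace ℝ (Fin n)) (hy : ContinuousOn y (Icc 0 T))
    (hint : IntegrableOn
      (fun s => Matrix.toEuclideanLin (A s) (y s) + Matrix.toEuclideanLin (B s) (δ s))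
      (Icc (0 : ℝ) T) volume)
    (heq : ∀ t ∈ Icc (0 : ℝ) T,
      y t = ∫ s in (0 : ℝ)..t,
        (Matrix.toEuclideanLin (A s) (y s) + Matrix.toEuclideanLin (B s) (δ s))) :
    ∀ s ∈ Icc (0 : ℝ) T,
      ‖y s‖ ≤ C₂ * Real.sqrt T * Real.exp (C₁ * T) *
        Real.sqrt (∫ t in Icc (0 : ℝ) T, ‖δ t‖ ^ 2) :=
  norm_le_of_linear_integral_equation_general T C₁ C₂ hT hC₁ hC₂ A B hA hB δ hδmeas hδsq y hy heq
end

section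
/- Let T > 0 and κ ≥ 0. Let g : (0,T) → (ℝᵐ →L[ℝ] ℝ) be measurable with ‖g(t)‖ ≤ κ for almost every t ∈ (0,T), and let C : (0,T) → Set(ℝᵐ) satisfy 0 ∈ C(t) for almost every t ∈ (0,T). Suppose that for every measurable u : (0,T) → ℝᵐ with ∫₀ᵀ ‖u(t)‖² dt < ∞ and u(t) ∈ C(t) for almost every t, one has ∫₀ᵀ g(t)(u(t)) dt ≤ 0. Then for every such u, g(t)(u(t)) ≤ 0 for almost every t ∈ (0,T). -/
open MeasureTheory Set

/-- Localization of the integrated first-order inequality: if `g(t)` are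
uniformly bounded continuous linear functionals on `ℝᵐ`, `0 ∈ C(t)` a.e., and
`∫₀ᵀ g(t)(u(t)) dt ≤ 0` for every measurable square-integrable selection `u(t) ∈ C(t)`,
then every such selection satisfies `g(t)(u(t)) ≤ 0` for almost every `t ∈ (0,T)`. -/
theorem ae_nonpos_of_integral_nonpos
    {m : ℕ} (T κ : ℝ) (hT : 0 < T) (hκ : 0 ≤ κ)
    (g : ℝ → (EuclideanSpace ℝ (Fin m) →L[ℝ] ℝ)) (hgmeas : Measurable g)
    (hgbd : ∀ᵐ t ∂(volume.restrict (Ioo (0 : ℝ) T)), ‖g t‖ ≤ κ)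
    (C : ℝ → Set (EuclideanSpace ℝ (Fin m)))
    (hC : ∀ᵐ t ∂(volume.restrict (Ioo (0 : ℝ) T)), (0 : EuclideanSpace ℝ (Fin m)) ∈ C t)
    (H : ∀ u : ℝ → EuclideanSpace ℝ (Fin m), Measurable u →
      IntegrableOn (fun t => ‖u t‖ ^ 2) (Ioo (0 : ℝ) T) volume →
      (∀ᵐ t ∂(volume.restrict (Ioo (0 : ℝ) T)), u t ∈ C t) →
      ∫ t in Ioo (0 : ℝ) T, g t (u t) ≤ 0) :
    ∀ u : ℝ → EuclideanSpace ℝ (Fin m), Measurable u →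
      IntegrableOn (fun t => ‖u t‖ ^ 2) (Ioo (0 : ℝ) T) volume →
      (∀ᵐ t ∂(volume.restrict (Ioo (0 : ℝ) T)), u t ∈ C t) →
      ∀ᵐ t ∂(volume.restrict (Ioo (0 : ℝ) T)), g t (u t) ≤ 0 := by
  intro u hu hu2 huC
  set μ := volume.restrict (Ioo (0 : ℝ) T) with hμ
  haveI : IsFiniteMeasure μ := by
    constructor
    rw [hμ, Measure.restrict_apply_univ, Real.volume_Ioo]
    exact ENNReal.ofReal_lt_top
  have hfmeas : Measurable fun t => g t (u t) :=
    isBoundedBilinearMap_apply.continuous.measurable.comp (hgmeas.prodMk hu)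
  have hfint : Integrable (fun t => g t (u t)) μ := by
    have hbd : Integrable (fun t => κ + κ * ‖u t‖ ^ 2) μ :=
      (integrable_const κ).add (hu2.const_mul κ)
    refine hbd.mono' hfmeas.aestronglyMeasurable ?_
    filter_upwards [hgbd] with t hg
    have h1 : ‖g t (u t)‖ ≤ ‖g t‖ * ‖u t‖ := (g t).le_opNorm _
    nlinarith [norm_nonneg (u t), norm_nonneg (g t), hκ, sq_nonneg (‖u t‖ - 1),
      mul_le_mul_of_nonneg_right hg (norm_nonneg (u t))]
  have key : ∀ s, MeasurableSet s → μ s < ⊤ → ∫ t in s, g t (u t) ∂μ ≤ 0 := by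
    intro s hs _
    have hvmeas : Measurable (s.indicator u) := hu.indicator hs
    have hv2 : IntegrableOn (fun t => ‖s.indicator u t‖ ^ 2) (Ioo (0 : ℝ) T) volume := by
      refine hu2.mono' ((hvmeas.norm.pow_const 2).aestronglyMeasurable) ?_
      filter_upwards with t
      rw [Real.norm_eq_abs, abs_of_nonneg (by positivity)]
      by_cases hts : t ∈ s <;> simp [hts] <;> positivity
    have hvC : ∀ᵐ t ∂μ, s.indicator u t ∈ C t := by
      filter_upwards [hC, huC] with t h0 hut
      by_cases hts : t ∈ s <;> simp [hts, h0, hut]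
    have hH := H _ hvmeas hv2 hvC
    have hpt : (fun t => g t (s.indicator u t))
        = s.indicator (fun t => g t (u t)) := by
      funext t
      by_cases hts : t ∈ s <;> simp [hts]
    rw [hpt, setIntegral_indicator hs] at hH
    rw [hμ, Measure.restrict_restrict hs]
    rwa [inter_comm] at hH
  have := ae_nonneg_of_forall_setIntegral_nonneg hfint.neg
    (fun s hs hμs => by simp only [Pi.neg_apply, integral_neg]; linarith [key s hs hμs])
  filter_upwards [this] with t ht
  simpa using ht
end

section
/- Let B be the closed unit ball of ℝ² (Euclidean norm), x = (1, 0) and v = (0, 1). Then for every w = (w₁, w₂) ∈ ℝ², one has dist((1,0) + h·(0,1) + h²·w, B)/h² → 0 as h → 0⁺ if and only if w₁ ≤ −1/2. In other words, the second-order adjacent subset T^{♭(2)}_B((1,0), (0,1)) equals { (w₁, w₂) ∈ ℝ² : w₁ ≤ −1/2 }. -/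
/-!
The distance from `y` to the unit ball is `max (‖y‖ - 1) 0`. For a unit vector `x` and `v ⟂ x`,
`‖x + h v + h² w‖² = 1 + h² (‖v‖² + 2⟪x, w⟫) + O(h³)`, and since `‖y‖ - 1 = (‖y‖² - 1) / (‖y‖ + 1)`
with `‖y‖ + 1 → 2`, the quotient `dist(x + h v + h² w, B) / h²` tends to
`max (⟪x, w⟫ + ‖v‖² / 2) 0`. For `x = (1, 0)`, `v = (0, 1)` this limit is `max (w₁ + 1/2) 0`.
-/

open Filter Metric Topology

theorem Metric.infDist_closedBall_eq_max {F : Type*} [NormedAddCommGroup F] [NormedSpace ℝ F]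
    (y c : F) {r : ℝ} (hr : 0 ≤ r) : infDist y (closedBall c r) = max (dist y c - r) 0 := by
  refine le_antisymm ?_ (max_le ?_ infDist_nonneg)
  · rcases le_or_gt (dist y c) r with hy | hy
    · simp [infDist_zero_of_mem (mem_closedBall.2 hy), hy]
    · -- compare with the radial projection of `y` onto the sphere
      set d := dist y c
      have hd : 0 < d := hr.trans_lt hy
      have hz : c + (r / d) • (y - c) ∈ closedBall c r := by
        rw [mem_closedBall, dist_eq_norm, add_sub_cancel_left, norm_smul, ← dist_eq_norm,
          Real.norm_of_nonneg (by positivity), div_mul_cancel₀ _ hd.ne']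
      calc infDist y (closedBall c r) ≤ dist y (c + (r / d) • (y - c)) :=
            infDist_le_dist_of_mem hz
        _ = d - r := by
          rw [dist_eq_norm, show y - (c + (r / d) • (y - c)) = (1 - r / d) • (y - c) by module,
            norm_smul, ← dist_eq_norm y c, Real.norm_of_nonneg, sub_mul, one_mul,
            div_mul_cancel₀ _ hd.ne']
          rw [sub_nonneg, div_le_one hd]
          exact hy.le
        _ ≤ max (d - r) 0 := le_max_left _ _
  · rw [le_infDist ⟨c, mem_closedBall_self hr⟩]
    intro z hz
    linarith [dist_triangle y z c, mem_closedBall.1 hz]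

theorem tendsto_sub_one_div_of_tendsto_sq_sub_one_div {α : Type*} {l : Filter α}
    {u g : α → ℝ} {c : ℝ} (hu : Tendsto u l (𝓝 1))
    (h : Tendsto (fun x => (u x ^ 2 - 1) / g x) l (𝓝 c)) :
    Tendsto (fun x => (u x - 1) / g x) l (𝓝 (c / 2)) := by
  have hu1 : Tendsto (fun x => u x + 1) l (𝓝 2) := by
    simpa [one_add_one_eq_two] using hu.add_const 1
  refine (h.div hu1 two_ne_zero).congr' ?_
  filter_upwards [hu1.eventually_ne two_ne_zero] with x hx
  rw [Pi.div_apply, div_right_comm, show u x ^ 2 - 1 = (u x - 1) * (u x + 1) by ring,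
    mul_div_cancel_right₀ _ hx]

section InnerProductSpace

variable {E : Type*} [NormedAddCommGroup E] [InnerProductSpace ℝ E]

theorem norm_add_smul_add_sq_smul_sq {x v : E} (hx : ‖x‖ = 1) (hxv : inner ℝ x v = 0)
    (w : E) (h : ℝ) :
    ‖x + h • v + h ^ 2 • w‖ ^ 2 =
      1 + h ^ 2 * (‖v‖ ^ 2 + 2 * inner ℝ x w + 2 * h * inner ℝ v w + h ^ 2 * ‖w‖ ^ 2) := by
  rw [← real_inner_self_eq_norm_sq]
  simp only [inner_add_left, inner_add_right, inner_smul_left, inner_smul_right,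
    real_inner_self_eq_norm_sq, hx, hxv, real_inner_comm x, real_inner_comm v,
    RCLike.conj_to_real]
  ring

theorem tendsto_infDist_closedBall_div_sq {x v : E} (hx : ‖x‖ = 1) (hxv : inner ℝ x v = 0)
    (w : E) :
    Tendsto (fun h : ℝ => infDist (x + h • v + h ^ 2 • w) (closedBall 0 1) / h ^ 2) (𝓝[≠] 0)
      (𝓝 (max (inner ℝ x w + ‖v‖ ^ 2 / 2) 0)) := by
  have hnorm : Tendsto (fun h : ℝ => ‖x + h • v + h ^ 2 • w‖) (𝓝[≠] 0) (𝓝 1) := by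
    have hcont : Continuous fun h : ℝ => ‖x + h • v + h ^ 2 • w‖ := by fun_prop
    simpa [hx] using (hcont.tendsto 0).mono_left nhdsWithin_le_nhds
  have hnorm_sq : Tendsto (fun h : ℝ => (‖x + h • v + h ^ 2 • w‖ ^ 2 - 1) / h ^ 2) (𝓝[≠] 0)
      (𝓝 (‖v‖ ^ 2 + 2 * inner ℝ x w)) := by
    have hcont : Continuous fun h : ℝ =>
        ‖v‖ ^ 2 + 2 * inner ℝ x w + 2 * h * inner ℝ v w + h ^ 2 * ‖w‖ ^ 2 := by fun_prop
    refine ((hcont.tendsto 0).mono_left nhdsWithin_le_nhds).congr' ?_ |>.trans (by simp)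
    filter_upwards [self_mem_nhdsWithin] with h (hh : h ≠ 0)
    rw [norm_add_smul_add_sq_smul_sq hx hxv, add_sub_cancel_left,
      mul_div_cancel_left₀ _ (pow_ne_zero 2 hh)]
  convert (tendsto_sub_one_div_of_tendsto_sq_sub_one_div hnorm hnorm_sq).max
    tendsto_const_nhds using 2
  · rw [infDist_closedBall_eq_max _ _ zero_le_one, dist_zero_right,
      ← max_div_div_right (sq_nonneg _), zero_div]
  · congr 1
    ring

end InnerProductSpace

/-- Let `B` be the closed unit ball of `ℝ²` (Euclidean norm), `x = (1,0)`
and `v = (0,1)`. For every `w = (w₁, w₂) ∈ ℝ²`, `dist((1,0) + h·(0,1) + h²·w, B)/h² → 0` as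
`h → 0⁺` if and only if `w₁ ≤ −1/2`; i.e. the second-order adjacent subset
`T^{♭(2)}_B((1,0),(0,1))` equals `{w : w₁ ≤ −1/2}`. -/
theorem secondOrderAdjacent_closedBall_at_one_zero (w : EuclideanSpace ℝ (Fin 2)) :
    Tendsto
      (fun h : ℝ =>
        infDist
          ((WithLp.equiv 2 (Fin 2 → ℝ)).symm ![1, 0] +
            h • (WithLp.equiv 2 (Fin 2 → ℝ)).symm ![0, 1] + h ^ 2 • w)
          (Metric.closedBall (0 : EuclideanSpace ℝ (Fin 2)) 1) / h ^ 2)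
      (nhdsWithin 0 (Set.Ioi 0)) (nhds 0) ↔ w 0 ≤ -(1 / 2) := by
  set x := (WithLp.equiv 2 (Fin 2 → ℝ)).symm ![1, 0]
  set v := (WithLp.equiv 2 (Fin 2 → ℝ)).symm ![0, 1]
  have hx : ‖x‖ = 1 := by simp [x, EuclideanSpace.norm_eq]
  have hv : ‖v‖ = 1 := by simp [v, EuclideanSpace.norm_eq]
  have hxv : inner ℝ x v = 0 := by simp [x, v, PiLp.inner_apply, Fin.sum_univ_two]
  have hxw : inner ℝ x w = w 0 := by simp [x, PiLp.inner_apply, Fin.sum_univ_two]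
  have hlim := (tendsto_infDist_closedBall_div_sq hx hxv w).mono_left (nhdsGT_le_nhdsNE 0)
  rw [hxw, hv] at hlim
  constructor
  · intro h0
    have hmax := tendsto_nhds_unique hlim h0
    linarith [le_max_left (w 0 + 1 ^ 2 / 2) 0]
  · intro hw
    rwa [max_eq_right (by linarith)] at hlim
end

section
/- Fix T > 0. Define X : [0,T] → ℝ by X(t) = ∫₀ᵗ (log(1 + τ²))² dτ and K : [0,T] → ℝ by K(t) = 4(1 − t⁴)/(1 + 6t² + t⁴)². Then for every triple (ℓ₀₁, ℓ₀₂, ℓ_φ) ∈ ℝ³ with ℓ₀₁ ≤ 0, ℓ₀₂ ≤ 0, ℓ_φ ≤ 0 and (ℓ₀₁, ℓ₀₂, ℓ_φ) ≠ (0,0,0), there exists a measurable, square-integrable σ : [0,T] → ℝ with σ(t) ≤ −1/2 for almost every t ∈ [0,T] such that 2ℓ_φ·∫₀ᵀ ( σ(t) + (1 + K(t)/2)·X(t)² − 4X(t) ) dt − 2(ℓ₀₁ + ℓ₀₂/(1 + T²))·X(T)² > 0. -/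
open MeasureTheory Set

/-- `X(t) = ∫₀ᵗ (log(1 + τ²))² dτ`, the first component of the variation vector field in
Example 2.1. -/
noncomputable def exX (t : ℝ) : ℝ := ∫ τ in (0 : ℝ)..t, (Real.log (1 + τ ^ 2)) ^ 2

/-- `K(t) = 4(1 − t⁴)/(1 + 6t² + t⁴)²`, the sectional curvature along the trajectory in
Example 2.1. -/
noncomputable def exK (t : ℝ) : ℝ := 4 * (1 - t ^ 4) / (1 + 6 * t ^ 2 + t ^ 4) ^ 2

/-!
A constant control `σ ≡ c` works. For `c` negative enough the integral `∫₀ᵀ (c + …)` is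
negative, so with nonpositive multipliers both terms of the expression are nonnegative. If
`ℓ_φ < 0` the first term is positive; if `ℓ_φ = 0`, one of `ℓ₀₁, ℓ₀₂` is negative and the second
term is positive because `X(T) > 0`.
-/

theorem continuous_log_one_add_sq_sq : Continuous fun τ : ℝ => Real.log (1 + τ ^ 2) ^ 2 :=
  ((continuous_const.add (continuous_pow 2)).log fun τ =>
    (by positivity : (0 : ℝ) < 1 + τ ^ 2).ne').pow 2

theorem continuous_exX : Continuous exX :=
  intervalIntegral.continuous_primitive
    (fun a b => continuous_log_one_add_sq_sq.intervalIntegrable a b) 0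

theorem continuous_exK : Continuous exK :=
  Continuous.div (by fun_prop) (by fun_prop) fun t => by positivity

theorem exX_pos {T : ℝ} (hT : 0 < T) : 0 < exX T := by
  refine intervalIntegral.intervalIntegral_pos_of_pos_on
    (continuous_log_one_add_sq_sq.intervalIntegrable 0 T) (fun τ hτ => ?_) hT
  have : 1 < 1 + τ ^ 2 := by nlinarith [hτ.1]
  exact pow_pos (Real.log_pos this) 2

theorem exists_le_intervalIntegral_const_add_neg {f : ℝ → ℝ} {a b : ℝ} (hab : a < b)
    (hf : IntervalIntegrable f volume a b) (c₀ : ℝ) :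
    ∃ c ≤ c₀, ∫ t in a..b, (c + f t) < 0 := by
  set I := ∫ t in a..b, f t
  refine ⟨min c₀ ((-I - 1) / (b - a)), min_le_left _ _, ?_⟩
  have hc : min c₀ ((-I - 1) / (b - a)) * (b - a) ≤ -I - 1 :=
    (le_div_iff₀ (sub_pos.2 hab)).1 (min_le_right _ _)
  rw [intervalIntegral.integral_add intervalIntegrable_const hf, intervalIntegral.integral_const,
    smul_eq_mul]
  linarith

theorem add_div_neg_of_nonpos {x y d : ℝ} (hx : x ≤ 0) (hy : y ≤ 0) (hxy : (x, y) ≠ (0, 0))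
    (hd : 0 < d) : x + y / d < 0 := by
  rcases hx.lt_or_eq with hx | rfl
  · linarith [div_nonpos_of_nonpos_of_nonneg hy hd.le]
  · have hy : y < 0 := hy.lt_of_ne fun h => hxy (by rw [h])
    simpa using div_neg_of_neg_of_pos hy hd

/-- For every nonzero triple `(ℓ₀₁, ℓ₀₂, ℓ_φ)` of nonpositive reals there is
a measurable, square-integrable `σ : [0,T] → ℝ` with `σ(t) ≤ −1/2` a.e. such that
`2ℓ_φ ∫₀ᵀ (σ(t) + (1 + K(t)/2) X(t)² − 4X(t)) dt − 2(ℓ₀₁ + ℓ₀₂/(1+T²)) X(T)² > 0`;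
hence the second-order necessary condition fails for every Lagrangian multiplier and
`ū = (1,0)` is not a weak Pareto optimal control. -/
theorem second_order_condition_fails (T : ℝ) (hT : 0 < T)
    (l01 l02 lphi : ℝ) (h01 : l01 ≤ 0) (h02 : l02 ≤ 0) (hphi : lphi ≤ 0)
    (hne : (l01, l02, lphi) ≠ (0, 0, 0)) :
    ∃ σ : ℝ → ℝ, Measurable σ ∧
      IntegrableOn (fun t => (σ t) ^ 2) (Icc (0 : ℝ) T) volume ∧
      (∀ᵐ t ∂(volume.restrict (Icc (0 : ℝ) T)), σ t ≤ -(1 / 2)) ∧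
      0 < 2 * lphi * (∫ t in (0 : ℝ)..T, (σ t + (1 + exK t / 2) * (exX t) ^ 2 - 4 * exX t))
          - 2 * (l01 + l02 / (1 + T ^ 2)) * (exX T) ^ 2 := by
  have hcont : Continuous fun t => (1 + exK t / 2) * exX t ^ 2 - 4 * exX t := by
    have := continuous_exX; have := continuous_exK; fun_prop
  obtain ⟨c, hc, hJ⟩ :=
    exists_le_intervalIntegral_const_add_neg hT (hcont.intervalIntegrable 0 T) (-(1 / 2))
  simp only [← add_sub_assoc] at hJ
  refine ⟨fun _ => c, measurable_const, integrableOn_const measure_Icc_lt_top.ne,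
    ae_of_all _ fun _ => hc, ?_⟩
  have hX := pow_pos (exX_pos hT) 2
  have hd : (0 : ℝ) < 1 + T ^ 2 := by positivity
  rcases hphi.lt_or_eq with hphi | rfl
  · have hs := add_nonpos h01 (div_nonpos_of_nonpos_of_nonneg h02 hd.le)
    nlinarith [mul_pos_of_neg_of_neg hphi hJ]
  · have hs := add_div_neg_of_nonpos h01 h02 (fun h => hne (by simp_all)) hd
    nlinarith
end
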